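/- arXiv:2403.17900 — 3 statements merged into one kernel-verified Lean document; each statement's English description precedes it below -/
import Mathlib

section
/- For distinct x, y in the open unit disk D, the Green's function G_D(x,y) = (1/2π) ln(|x−y|/(|x−y*||y|)), with y* = y/|y|², satisfies the antisymmetry identity x·∇ₓ⊥G_D(x,y) + y·∇ₓ⊥G_D(y,x) = 0. -/
open Real Complex
noncomputable section
/-- euclidean dot product on ℝ² ≅ ℂ -/
def dotC (v w : ℂ) : ℝ := (v * (starRingEnd ℂ) w).re
/-- rotation by π/2 on ℝ² ≅ ℂ -/
def perpC (v : ℂ) : ℂ := Complex.I * v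
/-- inversion in the unit circle -/
def inv0 (y : ℂ) : ℂ := y / ((‖y‖ : ℂ)^2)
/-- Green function of the unit disk: (1/2π) ln (|x−y| / (|x−y*||y|)) -/
def GD (x y : ℂ) : ℝ :=
  (1/(2*π)) * (Real.log ‖x - y‖ - Real.log (‖x - inv0 y‖ * ‖y‖))
/-- perpendicular gradient (in the first variable) of the disk Green function -/
def gradPerpGD (x y : ℂ) : ℂ := perpC (gradient (fun z => GD z y) x)

lemma hasGradientAt_log_abs (a x : ℂ) (h : x ≠ a) :
    HasGradientAt (fun z => Real.log (‖z - a‖))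
      ((x - a) / ((‖x - a‖ : ℂ)^2)) x := by
  have hne : x - a ≠ 0 := sub_ne_zero.mpr h
  have hns : Complex.normSq (x - a) ≠ 0 := by
    simpa [Complex.normSq_eq_zero] using hne
  have hsub : HasFDerivAt (fun z : ℂ => z - a) (ContinuousLinearMap.id ℝ ℂ) x :=
    (hasFDerivAt_id x).sub_const a
  have h1 : HasFDerivAt (fun z : ℂ => Complex.normSq (z - a))
      ((fderivInnerCLM ℝ ((x - a : ℂ), (x - a : ℂ))).comp
        ((ContinuousLinearMap.id ℝ ℂ).prod (ContinuousLinearMap.id ℝ ℂ))) x := by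
    have := hsub.inner ℝ hsub
    have hfun : (fun z : ℂ => Complex.normSq (z - a)) = fun t => inner ℝ (t - a) (t - a) := by
      funext z
      rw [Complex.inner]
      simp [Complex.normSq_apply, Complex.mul_re]
      ring
    rw [hfun]; exact this
  have h2 : HasDerivAt Real.log (Complex.normSq (x - a))⁻¹ (Complex.normSq (x - a)) :=
    Real.hasDerivAt_log hns
  have h3 := h2.comp_hasFDerivAt x h1
  have h4 := h3.const_smul (1/2 : ℝ)
  have heq : (fun z : ℂ => Real.log (‖z - a‖))
      = fun z => (1/2 : ℝ) • Real.log (Complex.normSq (z - a)) := by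
    funext z
    rw [Complex.norm_def, Real.log_sqrt (Complex.normSq_nonneg _)]
    simp [smul_eq_mul]; ring
  rw [hasGradientAt_iff_hasFDerivAt]
  rw [heq]
  refine h4.congr_fderiv ?_
  symm
  apply ContinuousLinearMap.ext
  intro v
  show (inner ℝ ((x - a) / ((‖x - a‖ : ℂ)^2)) v : ℝ) = _
  rw [Complex.inner]
  simp only [ContinuousLinearMap.coe_smul', Pi.smul_apply, ContinuousLinearMap.coe_comp',
    Function.comp_apply, ContinuousLinearMap.smulRight_apply, ContinuousLinearMap.one_apply,
    ContinuousLinearMap.prod_apply, ContinuousLinearMap.coe_id', id_eq, fderivInnerCLM_apply,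
    Complex.inner, smul_eq_mul]
  have hcast : ((‖x - a‖ : ℂ))^2 = ((Complex.normSq (x - a) : ℝ) : ℂ) := by
    rw [← Complex.ofReal_pow, Complex.sq_norm]
  rw [hcast, map_div₀, Complex.conj_ofReal, mul_div_assoc', Complex.div_ofReal_re]
  simp only [Complex.mul_re, Complex.conj_re, Complex.conj_im]
  field_simp
  ring

lemma hga_main (c k : ℝ) {f1 f2 : ℂ → ℝ} {g1 g2 : ℂ} {x : ℂ}
    (h1 : HasGradientAt f1 g1 x) (h2 : HasGradientAt f2 g2 x) :
    HasGradientAt (fun z => c * (f1 z - (f2 z + k))) (c • (g1 - g2)) x := by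
  rw [hasGradientAt_iff_hasFDerivAt] at h1 h2 ⊢
  have H := ((h1.sub (h2.add_const k)).const_smul c)
  have key : (InnerProductSpace.toDual ℝ ℂ) (c • (g1 - g2))
      = c • ((InnerProductSpace.toDual ℝ ℂ) g1 - (InnerProductSpace.toDual ℝ ℂ) g2) := by
    rw [map_smulₛₗ, map_sub]
    simp
  rw [key]
  have heq : (fun z => c * (f1 z - (f2 z + k))) = (fun z => c • (f1 z - (f2 z + k))) := by
    funext z; simp [smul_eq_mul]
  rw [heq]
  exact H

lemma gradGD_zero (x : ℂ) (hx0 : x ≠ 0) :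
    gradient (fun z => GD z 0) x = (1/(2*π)) • (x / ((‖x‖ : ℂ))^2) := by
  have h1 := hasGradientAt_log_abs 0 x hx0
  have h2 : HasGradientAt (fun _ : ℂ => (0:ℝ)) 0 x := hasGradientAt_const x 0
  have H := hga_main (1/(2*π)) 0 h1 h2
  have heq : (fun z => GD z 0) = (fun z => (1/(2*π)) * (Real.log (‖z - 0‖) - (0 + 0))) := by
    funext z; simp [GD, inv0]
  rw [heq]
  simpa using H.gradient

lemma gradGD_ne (x y : ℂ) (hx : ‖x‖ < 1) (hy : ‖y‖ < 1)
    (hy0 : y ≠ 0) (hxy : x ≠ y) :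
    gradient (fun z => GD z y) x = (1/(2*π)) •
      ((x - y) / ((‖x - y‖ : ℂ))^2 - (x - inv0 y) / ((‖x - inv0 y‖ : ℂ))^2) := by
  have hay : ‖y‖ ≠ 0 := by simpa using hy0
  have hinv : ‖inv0 y‖ = (‖y‖)⁻¹ := by
    rw [inv0, norm_div, norm_pow, Complex.norm_real, norm_norm, pow_two]
    field_simp
  have hxinv : x ≠ inv0 y := by
    intro h
    have h1 : (1:ℝ) < ‖inv0 y‖ := by
      rw [hinv]
      exact one_lt_inv_iff₀.mpr ⟨norm_pos_iff.mpr hy0, hy⟩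
    rw [← h] at h1; linarith
  have h1 := hasGradientAt_log_abs y x hxy
  have h2 := hasGradientAt_log_abs (inv0 y) x hxinv
  have H := hga_main (1/(2*π)) (Real.log (‖y‖)) h1 h2
  have Hev : (fun z => GD z y) =ᶠ[nhds x]
      (fun z => (1/(2*π)) * (Real.log (‖z - y‖) -
        (Real.log (‖z - inv0 y‖) + Real.log (‖y‖)))) := by
    have hopen : IsOpen {z : ℂ | z ≠ inv0 y} := isOpen_ne
    filter_upwards [hopen.mem_nhds hxinv] with z hz
    have : ‖z - inv0 y‖ ≠ 0 := by
      simpa [sub_eq_zero] using hz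
    simp only [GD]
    rw [Real.log_mul this hay]
  exact (H.congr_of_eventuallyEq Hev).gradient

lemma dot_perp_smul (v w : ℂ) (c : ℝ) :
    dotC v (perpC (c • w)) = c * (v * (starRingEnd ℂ) w).im := by
  simp [dotC, perpC, Complex.real_smul, Complex.mul_re, Complex.mul_im]
  ring

lemma im_mul_conj_div (v z : ℂ) (n : ℝ) :
    (v * (starRingEnd ℂ) (z / (n:ℂ))).im = (v * (starRingEnd ℂ) z).im / n := by
  rw [map_div₀, Complex.conj_ofReal, ← mul_div_assoc, Complex.div_ofReal_im]

lemma keyid (x y : ℂ) (hnx : Complex.normSq x ≠ 0) (hny : Complex.normSq y ≠ 0) :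
    (Complex.normSq y) * Complex.normSq (x - y/((Complex.normSq y : ℝ):ℂ))
      = (Complex.normSq x) * Complex.normSq (y - x/((Complex.normSq x : ℝ):ℂ)) := by
  simp only [Complex.normSq_apply, Complex.sub_re, Complex.sub_im,
    Complex.div_ofReal_re, Complex.div_ofReal_im] at *
  have hnx' : x.re ^ 2 + x.im ^ 2 ≠ 0 := by rw [pow_two, pow_two]; exact hnx
  have hny' : y.re ^ 2 + y.im ^ 2 ≠ 0 := by rw [pow_two, pow_two]; exact hny
  field_simp
  ring

lemma castNS (w : ℂ) : ((‖w‖ : ℂ))^2 = ((Complex.normSq w : ℝ) : ℂ) := by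
  rw [← Complex.ofReal_pow, Complex.sq_norm]

set_option maxHeartbeats 2000000 in
theorem stmt_7 (x y : ℂ) (hx : ‖x‖ < 1) (hy : ‖y‖ < 1) (hxy : x ≠ y) :
    dotC x (gradPerpGD x y) + dotC y (gradPerpGD y x) = 0 := by
  have c := (1:ℝ)/(2*π)
  rcases eq_or_ne y 0 with rfl | hy0
  · have hx0 : x ≠ 0 := hxy
    rw [gradPerpGD, gradPerpGD, gradGD_zero x hx0]
    have hns : Complex.normSq x ≠ 0 := by simpa [Complex.normSq_eq_zero] using hx0
    rw [castNS]
    simp only [dotC, perpC, Complex.real_smul, map_mul, map_div₀, Complex.conj_ofReal,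
      Complex.mul_re, Complex.mul_im, Complex.conj_re, Complex.conj_im,
      Complex.I_re, Complex.I_im, Complex.ofReal_re, Complex.ofReal_im,
      Complex.div_re, Complex.div_im, Complex.normSq_apply, Complex.zero_re, Complex.zero_im]
    simp only [Complex.normSq_apply] at hns
    field_simp
    ring
  · rcases eq_or_ne x 0 with rfl | hx0
    · rw [gradPerpGD, gradPerpGD, gradGD_zero y hy0]
      have hns : Complex.normSq y ≠ 0 := by simpa [Complex.normSq_eq_zero] using hy0
      rw [castNS]
      simp only [dotC, perpC, Complex.real_smul, map_mul, map_div₀, Complex.conj_ofReal,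
        Complex.mul_re, Complex.mul_im, Complex.conj_re, Complex.conj_im,
        Complex.I_re, Complex.I_im, Complex.ofReal_re, Complex.ofReal_im,
        Complex.div_re, Complex.div_im, Complex.normSq_apply, Complex.zero_re, Complex.zero_im]
      simp only [Complex.normSq_apply] at hns
      field_simp
      ring
    · rw [gradPerpGD, gradPerpGD, gradGD_ne x y hx hy hy0 hxy, gradGD_ne y x hy hx hx0 hxy.symm]
      have hnx : Complex.normSq x ≠ 0 := by simpa [Complex.normSq_eq_zero] using hx0
      have hny : Complex.normSq y ≠ 0 := by simpa [Complex.normSq_eq_zero] using hy0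
      have hnxy : Complex.normSq (x - y) ≠ 0 := by
        simpa [Complex.normSq_eq_zero, sub_eq_zero] using hxy
      have hnyx : Complex.normSq (y - x) ≠ 0 := by
        simpa [Complex.normSq_eq_zero, sub_eq_zero] using hxy.symm
      have hxiy : x ≠ inv0 y := by
        intro h
        have hinv : ‖inv0 y‖ = (‖y‖)⁻¹ := by
          rw [inv0, norm_div, norm_pow, Complex.norm_real, norm_norm, pow_two]
          field_simp
        have h1 : (1:ℝ) < ‖inv0 y‖ := by
          rw [hinv]; exact one_lt_inv_iff₀.mpr ⟨norm_pos_iff.mpr hy0, hy⟩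
        rw [← h] at h1; linarith
      have hyix : y ≠ inv0 x := by
        intro h
        have hinv : ‖inv0 x‖ = (‖x‖)⁻¹ := by
          rw [inv0, norm_div, norm_pow, Complex.norm_real, norm_norm, pow_two]
          field_simp
        have h1 : (1:ℝ) < ‖inv0 x‖ := by
          rw [hinv]; exact one_lt_inv_iff₀.mpr ⟨norm_pos_iff.mpr hx0, hx⟩
        rw [← h] at h1; linarith
      rw [dot_perp_smul, dot_perp_smul, ← mul_add]
      apply mul_eq_zero_of_right
      simp only [inv0, castNS]
      simp only [map_sub, mul_sub, Complex.sub_im, im_mul_conj_div, Complex.mul_conj,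
        Complex.ofReal_im]
      have hns_yx : Complex.normSq (y - x) = Complex.normSq (x - y) := by
        rw [← neg_sub x y, Complex.normSq_neg]
      rw [hns_yx]
      have ht : (y * (starRingEnd ℂ) x).im = -(x * (starRingEnd ℂ) y).im := by
        simp [Complex.mul_im]; ring
      rw [ht]
      have hA : Complex.normSq (x - y / ((Complex.normSq y : ℝ):ℂ)) ≠ 0 := by
        rw [Ne, Complex.normSq_eq_zero, sub_eq_zero]
        intro h
        exact hxiy (by rw [inv0, castNS]; exact h)
      have hB : Complex.normSq (y - x / ((Complex.normSq x : ℝ):ℂ)) ≠ 0 := by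
        rw [Ne, Complex.normSq_eq_zero, sub_eq_zero]
        intro h
        exact hyix (by rw [inv0, castNS]; exact h)
      have key := keyid x y hnx hny
      set s := (x * (starRingEnd ℂ) y).im
      set nx := Complex.normSq x
      set ny := Complex.normSq y
      set A := Complex.normSq (x - y / ((ny : ℝ):ℂ))
      set B := Complex.normSq (y - x / ((nx : ℝ):ℂ))
      set N := Complex.normSq (x - y)
      clear_value s nx ny A B N
      have e1 : s / ny / A = s / nx / B := by
        rw [div_div, div_div, key]
      have e2 : (0 - s) / N - (0 - s / ny) / A + ((0 - -s) / N - (0 - -s / nx) / B)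
          = s / ny / A - s / nx / B := by ring
      rw [e2, e1, sub_self]
end
end

section
/- Let N ≥ 1, a₁,…,a_N > 0, and d₁,…,d_N: [0,T) → (0,1] differentiable. Define J(t) = Σᵢ aᵢ dᵢ(t)(2−dᵢ(t)). Then Σᵢ aᵢ dᵢ(t) ≤ J(t) ≤ 2 Σᵢ aᵢ dᵢ(t) for all t; moreover, if |J'(t)| ≤ C Σᵢ aᵢ dᵢ(t) for some C > 0 and all t, then Σᵢ aᵢ dᵢ(t) ≥ (J(0)/2)e^{−2Ct} for all t ∈ [0,T), so Σᵢ aᵢ dᵢ(t) does not converge to 0 as t → T. -/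
open Real Filter
noncomputable section

theorem stmt_17 (N : ℕ) (hN : 1 ≤ N) (T C : ℝ) (hT : 0 < T) (hC : 0 < C)
    (a : Fin N → ℝ) (ha : ∀ i, 0 < a i)
    (d : Fin N → ℝ → ℝ)
    (hd : ∀ i, ∀ t ∈ Set.Ico (0:ℝ) T, 0 < d i t ∧ d i t ≤ 1)
    (hdiff : ∀ i, ∀ t ∈ Set.Ico (0:ℝ) T, DifferentiableAt ℝ (d i) t)
    (J' : ℝ → ℝ)
    (hJ : ∀ t ∈ Set.Ico (0:ℝ) T,
      HasDerivAt (fun s => ∑ i, a i * d i s * (2 - d i s)) (J' t) t)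
    (hbound : ∀ t ∈ Set.Ico (0:ℝ) T, |J' t| ≤ C * ∑ i, a i * d i t) :
    (∀ t ∈ Set.Ico (0:ℝ) T,
        (∑ i, a i * d i t) ≤ (∑ i, a i * d i t * (2 - d i t)) ∧
        (∑ i, a i * d i t * (2 - d i t)) ≤ 2 * ∑ i, a i * d i t) ∧
    (∀ t ∈ Set.Ico (0:ℝ) T,
        ((∑ i, a i * d i 0 * (2 - d i 0)) / 2) * Real.exp (-2 * C * t) ≤ ∑ i, a i * d i t) ∧
    ¬ Tendsto (fun t => ∑ i, a i * d i t) (nhdsWithin T (Set.Iio T)) (nhds 0) := by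
  set J : ℝ → ℝ := fun s => ∑ i, a i * d i s * (2 - d i s) with hJdef
  set S : ℝ → ℝ := fun s => ∑ i, a i * d i s with hSdef
  -- Part 1
  have part1 : ∀ t ∈ Set.Ico (0:ℝ) T, S t ≤ J t ∧ J t ≤ 2 * S t := by
    intro t ht
    constructor
    · apply Finset.sum_le_sum
      intro i _
      obtain ⟨h1, h2⟩ := hd i t ht
      nlinarith [mul_nonneg (mul_pos (ha i) h1).le (sub_nonneg.mpr h2)]
    · rw [Finset.mul_sum]
      apply Finset.sum_le_sum
      intro i _
      obtain ⟨h1, h2⟩ := hd i t ht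
      nlinarith [mul_nonneg (mul_pos (ha i) h1).le h1.le]
  have hSpos : ∀ t ∈ Set.Ico (0:ℝ) T, 0 < S t := by
    intro t ht
    apply Finset.sum_pos
    · intro i _
      exact mul_pos (ha i) (hd i t ht).1
    · exact Finset.univ_nonempty_iff.mpr (Fin.pos_iff_nonempty.mp hN)
  have h0mem : (0:ℝ) ∈ Set.Ico (0:ℝ) T := ⟨le_refl _, hT⟩
  have hJ0pos : 0 < J 0 := lt_of_lt_of_le (hSpos 0 h0mem) (part1 0 h0mem).1
  -- Part 2
  have part2 : ∀ t ∈ Set.Ico (0:ℝ) T, (J 0 / 2) * Real.exp (-2 * C * t) ≤ S t := by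
    intro t ht
    obtain ⟨ht0, htT⟩ := ht
    -- monotonicity of g s = J s * exp (C * s) on [0, t]
    have hsub : Set.Icc (0:ℝ) t ⊆ Set.Ico (0:ℝ) T := fun s hs =>
      ⟨hs.1, lt_of_le_of_lt hs.2 htT⟩
    have hgderiv : ∀ s ∈ Set.Icc (0:ℝ) t,
        HasDerivAt (fun u => J u * Real.exp (C * u))
          (J' s * Real.exp (C * s) + J s * (Real.exp (C * s) * C)) s := by
      intro s hs
      have := (hJ s (hsub hs)).mul (((hasDerivAt_id s).const_mul C).exp)
      exact this.congr_deriv (by simp)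
    have hderiv_nonneg : ∀ s ∈ Set.Icc (0:ℝ) t,
        0 ≤ J' s * Real.exp (C * s) + J s * (Real.exp (C * s) * C) := by
      intro s hs
      have hsm := hsub hs
      have hb := hbound s hsm
      have h1 : -(C * S s) ≤ J' s := neg_le_of_abs_le hb
      have h2 : S s ≤ J s := (part1 s hsm).1
      have he : 0 < Real.exp (C * s) := Real.exp_pos _
      have hSJ : C * S s ≤ C * J s := mul_le_mul_of_nonneg_left h2 hC.le
      have hkey : 0 ≤ J' s + C * J s := by
        simp only [hSdef] at h1
        linarith
      nlinarith [mul_nonneg hkey he.le]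
    have hmono : MonotoneOn (fun u => J u * Real.exp (C * u)) (Set.Icc (0:ℝ) t) := by
      apply monotoneOn_of_deriv_nonneg (convex_Icc 0 t)
      · intro s hs
        exact ((hgderiv s hs).differentiableAt.continuousAt).continuousWithinAt
      · intro s hs
        rw [interior_Icc] at hs
        exact (hgderiv s (Set.Ioo_subset_Icc_self hs)).differentiableAt.differentiableWithinAt
      · intro s hs
        rw [interior_Icc] at hs
        rw [(hgderiv s (Set.Ioo_subset_Icc_self hs)).deriv]
        exact hderiv_nonneg s (Set.Ioo_subset_Icc_self hs)
    have hg0t := hmono (Set.left_mem_Icc.mpr ht0) (Set.right_mem_Icc.mpr ht0) ht0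
    simp only [mul_zero, Real.exp_zero, mul_one] at hg0t
    have htm : t ∈ Set.Ico (0:ℝ) T := ⟨ht0, htT⟩
    have hJt_nonneg : 0 ≤ J t := le_trans (hSpos t htm).le (part1 t htm).1
    have hee : Real.exp (C * t) * Real.exp (-2 * C * t) = Real.exp (-(C * t)) := by
      rw [← Real.exp_add]; ring_nf
    have hee1 : Real.exp (C * t) * Real.exp (-2 * C * t) ≤ 1 := by
      rw [hee]
      exact Real.exp_le_one_iff.mpr (by nlinarith)
    have h3 : J 0 * Real.exp (-2 * C * t) ≤ J t * (Real.exp (C * t) * Real.exp (-2 * C * t)) := by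
      nlinarith [Real.exp_pos (-2 * C * t), hg0t]
    have h4 : J t * (Real.exp (C * t) * Real.exp (-2 * C * t)) ≤ J t :=
      mul_le_of_le_one_right hJt_nonneg hee1
    have h5 := (part1 t htm).2
    linarith
  refine ⟨fun t ht => ⟨(part1 t ht).1, (part1 t ht).2⟩, part2, ?_⟩
  -- Part 3
  intro htend
  set ε := (J 0 / 2) * Real.exp (-2 * C * T) with hε
  have hεpos : 0 < ε := mul_pos (by linarith) (Real.exp_pos _)
  have h1 : ∀ᶠ t in nhdsWithin T (Set.Iio T), |S t| < ε := by
    have := htend (Metric.ball_mem_nhds 0 hεpos)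
    filter_upwards [this] with t ht
    simpa [Real.dist_eq] using ht
  have h2 : Set.Ioo 0 T ∈ nhdsWithin T (Set.Iio T) := Ioo_mem_nhdsLT_of_mem ⟨hT, le_refl T⟩
  obtain ⟨t, ht1, ht2⟩ := (h1.and (show ∀ᶠ t in nhdsWithin T (Set.Iio T), t ∈ Set.Ioo 0 T from h2)).exists
  have htm : t ∈ Set.Ico (0:ℝ) T := ⟨ht2.1.le, ht2.2⟩
  have hlb := part2 t htm
  have : ε ≤ (J 0 / 2) * Real.exp (-2 * C * t) := by
    apply mul_le_mul_of_nonneg_left _ (by linarith)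
    apply Real.exp_le_exp.mpr
    nlinarith [htm.2.le]
  have := this.trans hlb
  have habs : S t < ε := lt_of_le_of_lt (le_abs_self _) ht1
  linarith
end
end

section
/- Let Q be a finite nonempty index set, (a_k)_{k∈Q} nonzero reals with A := |Σ_{k∈Q} a_k| > 0, a := Σ_{k∈Q} |a_k|, and (d_k)_{k∈Q} positive reals. Suppose there is a constant C with 1 ≤ C < 1/(1 − A/a) such that max_k d_k ≤ C min_k d_k. Then, setting F = (Σ_k a_k d_k)/(Σ_k a_k), one has F ≥ (a/A + C(1 − a/A)) · min_k d_k, and the coefficient c = a/A + C(1 − a/A) is strictly positive. -/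
open Real
noncomputable section

theorem stmt_18 {ι : Type*} (Q : Finset ι) (hQ : Q.Nonempty)
    (a d : ι → ℝ) (ha : ∀ k ∈ Q, a k ≠ 0) (hd : ∀ k ∈ Q, 0 < d k)
    (A aa : ℝ) (hA : A = |∑ k ∈ Q, a k|) (haa : aa = ∑ k ∈ Q, |a k|)
    (hApos : 0 < A)
    (C : ℝ) (hC1 : 1 ≤ C) (hC2 : C < 1 / (1 - A / aa))
    (hmaxmin : Q.sup' hQ d ≤ C * Q.inf' hQ d) :
    0 < aa / A + C * (1 - aa / A) ∧
      (aa / A + C * (1 - aa / A)) * Q.inf' hQ d ≤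
        (∑ k ∈ Q, a k * d k) / (∑ k ∈ Q, a k) := by
  set m := Q.inf' hQ d with hm
  set S := ∑ k ∈ Q, a k with hSdef
  have hmpos : 0 < m := (Finset.lt_inf'_iff hQ).2 fun k hk => hd k hk
  have hAle : A ≤ aa := by
    rw [hA, haa]; exact Finset.abs_sum_le_sum_abs _ _
  have haapos : 0 < aa := lt_of_lt_of_le hApos hAle
  have hAlt : A < aa := by
    rcases lt_or_eq_of_le hAle with h | h
    · exact h
    · exfalso
      rw [h, div_self haapos.ne', sub_self] at hC2
      simp at hC2; linarith
  have hsub : (0:ℝ) < aa - A := by linarith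
  have hCkey : C * (aa - A) < aa := by
    have h1 : 1 - A / aa = (aa - A) / aa := by field_simp
    rw [h1, one_div_div] at hC2
    exact (lt_div_iff₀ hsub).1 hC2
  have hcA : (aa / A + C * (1 - aa / A)) * A = aa - C * (aa - A) := by
    field_simp; ring
  have hcpos : 0 < aa / A + C * (1 - aa / A) := by
    have h : 0 < (aa / A + C * (1 - aa / A)) * A / A :=
      div_pos (by rw [hcA]; linarith) hApos
    rwa [mul_div_cancel_right₀ _ hApos.ne'] at h
  refine ⟨hcpos, ?_⟩
  have hSabs : |S| = A := hA.symm
  have hSne : S ≠ 0 := by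
    intro h; rw [h, abs_zero] at hSabs; linarith
  have key : ∀ e : ℝ, e = 1 ∨ e = -1 →
      m * ((C + 1) / 2 * (e * S) - (C - 1) / 2 * aa) ≤ e * ∑ k ∈ Q, a k * d k := by
    intro e he
    have h1 : e * ∑ k ∈ Q, a k * d k = ∑ k ∈ Q, e * (a k * d k) := Finset.mul_sum _ _ _
    have h2 : m * ((C + 1) / 2 * (e * S) - (C - 1) / 2 * aa)
        = ∑ k ∈ Q, (m * ((C + 1) / 2) * (e * a k) - m * ((C - 1) / 2) * |a k|) := by
      rw [Finset.sum_sub_distrib, ← Finset.mul_sum, ← Finset.mul_sum, ← Finset.mul_sum,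
        ← hSdef, ← haa]
      ring
    rw [h1, h2]
    apply Finset.sum_le_sum
    intro k hk
    have hdm : m ≤ d k := Finset.inf'_le _ hk
    have hdM : d k ≤ C * m := le_trans (Finset.le_sup' _ hk) hmaxmin
    rcases le_or_gt 0 (e * a k) with hs | hs
    · have habs : |a k| = e * a k := by
        rcases he with rfl | rfl
        · simpa using abs_of_nonneg (by linarith : (0:ℝ) ≤ a k)
        · have : a k ≤ 0 := by nlinarith
          rw [abs_of_nonpos this]; ring
      rw [habs]
      nlinarith [mul_le_mul_of_nonneg_left hdm hs]
    · have habs : |a k| = -(e * a k) := by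
        rcases he with rfl | rfl
        · have : a k < 0 := by nlinarith
          rw [abs_of_neg this]; ring
        · have : 0 < a k := by nlinarith
          rw [abs_of_pos this]; ring
      rw [habs]
      nlinarith [mul_le_mul_of_nonpos_left hdM hs.le]
  have hcmA : (aa / A + C * (1 - aa / A)) * m * A ≤ m * ((C + 1) / 2 * A - (C - 1) / 2 * aa) := by
    have h := mul_nonneg (mul_nonneg hmpos.le (sub_nonneg.2 hC1)) (sub_nonneg.2 hAle)
    have : (aa / A + C * (1 - aa / A)) * m * A = m * (aa - C * (aa - A)) := by
      rw [mul_right_comm, hcA]; ring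
    nlinarith
  rcases hSne.lt_or_gt with hSneg | hSpos
  · have hSA : -S = A := by rw [← hSabs, abs_of_neg hSneg]
    rw [le_div_iff_of_neg hSneg]
    have hk := key (-1) (Or.inr rfl)
    rw [show (-1 : ℝ) * S = -S from by ring, hSA] at hk
    have heq : (aa / A + C * (1 - aa / A)) * m * S = -((aa / A + C * (1 - aa / A)) * m * A) := by
      rw [show S = -A by linarith]; ring
    linarith
  · have hSA : S = A := by rw [← hSabs, abs_of_pos hSpos]
    rw [le_div_iff₀ hSpos]
    have hk := key 1 (Or.inl rfl)
    rw [one_mul, hSA] at hk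
    have heq : (aa / A + C * (1 - aa / A)) * m * S = (aa / A + C * (1 - aa / A)) * m * A := by
      rw [hSA]
    linarith
end
end
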